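/- Let ε > 0 and μ > 0 with ε ≤ μ², and let b, c be real numbers with 0 < α ≤ b ≤ B and 0 < γ ≤ c ≤ C. Let z₀ = (μb - √(μ²b² + 4εc))/(2ε) and z₁ = (μb + √(μ²b² + 4εc))/(2ε) be the two roots of -ε z² + μ b z + c = 0. Then γ/(μ(B + √C)) ≤ -z₀ ≤ C/(μα) and μα/ε ≤ z₁ ≤ μ(B + √C)/ε. In particular, in the regime ε ≤ μ² the negative root is of order 1/μ and the positive root is of order μ/ε. -/
import Mathlib
set_option maxHeartbeats 1000000


/-- Diffusion-convection-reaction regime ε ≤ μ²: with 0 < α ≤ b ≤ B and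
0 < γ ≤ c ≤ C, the roots z₀ < 0 < z₁ of -ε z² + μ b z + c = 0 satisfy
γ/(μ(B + √C)) ≤ -z₀ ≤ C/(μα) and μα/ε ≤ z₁ ≤ μ(B + √C)/ε. -/
theorem roots_regime_diffusion_convection_reaction (ε μ b c α B γ C : ℝ)
    (hε : 0 < ε) (hμ : 0 < μ) (hεμ : ε ≤ μ ^ 2)
    (hα : 0 < α) (hαb : α ≤ b) (hbB : b ≤ B)
    (hγ : 0 < γ) (hγc : γ ≤ c) (hcC : c ≤ C) :
    ∃ z₀ z₁ : ℝ,
      z₀ = (μ * b - Real.sqrt (μ ^ 2 * b ^ 2 + 4 * ε * c)) / (2 * ε) ∧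
      z₁ = (μ * b + Real.sqrt (μ ^ 2 * b ^ 2 + 4 * ε * c)) / (2 * ε) ∧
      γ / (μ * (B + Real.sqrt C)) ≤ -z₀ ∧ -z₀ ≤ C / (μ * α) ∧
      μ * α / ε ≤ z₁ ∧ z₁ ≤ μ * (B + Real.sqrt C) / ε := by
  have hc : 0 < c := hγ.trans_le hγc
  have hC : 0 < C := hc.trans_le hcC
  have hb : 0 < b := hα.trans_le hαb
  have hB : 0 < B := hb.trans_le hbB
  set D := Real.sqrt (μ ^ 2 * b ^ 2 + 4 * ε * c) with hDdef
  have harg : (0:ℝ) ≤ μ ^ 2 * b ^ 2 + 4 * ε * c := by nlinarith [mul_pos hε hc]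
  have hD2 : D ^ 2 = μ ^ 2 * b ^ 2 + 4 * ε * c := Real.sq_sqrt harg
  have hDnn : 0 ≤ D := Real.sqrt_nonneg _
  have hsC : Real.sqrt C ^ 2 = C := Real.sq_sqrt hC.le
  have hsCnn : 0 ≤ Real.sqrt C := Real.sqrt_nonneg _
  have hμb : 0 < μ * b := by positivity
  have hμα : μ * α ≤ μ * b := mul_le_mul_of_nonneg_left hαb hμ.le
  have hμB : μ * b ≤ μ * B := mul_le_mul_of_nonneg_left hbB hμ.le
  have hDge : μ * b ≤ D := by
    nlinarith [sq_nonneg (D - μ * b), sq_nonneg (D + μ * b), mul_pos hε hc]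
  have hDle : D ≤ μ * B + 2 * μ * Real.sqrt C := by
    rw [hDdef]
    have hb2 : b ^ 2 ≤ B ^ 2 := by nlinarith
    have hec : ε * c ≤ μ ^ 2 * C := by nlinarith
    have h : μ ^ 2 * b ^ 2 + 4 * ε * c ≤ (μ * B + 2 * μ * Real.sqrt C) ^ 2 := by
      nlinarith [mul_nonneg (mul_nonneg hμ.le hB.le) (mul_nonneg hμ.le hsCnn),
        sq_nonneg μ, mul_le_mul_of_nonneg_left hb2 (sq_nonneg μ)]
    calc Real.sqrt (μ ^ 2 * b ^ 2 + 4 * ε * c)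
        ≤ Real.sqrt ((μ * B + 2 * μ * Real.sqrt C) ^ 2) := Real.sqrt_le_sqrt h
      _ = μ * B + 2 * μ * Real.sqrt C := Real.sqrt_sq (by positivity)
  have hprod : (D - μ * b) * (D + μ * b) = 4 * ε * c := by nlinarith
  have h1 : 0 ≤ D - μ * b := by linarith
  have h2 : D + μ * b ≤ 2 * (μ * (B + Real.sqrt C)) := by linarith
  have h3 : 2 * (μ * α) ≤ D + μ * b := by linarith
  have hBsC : 0 < μ * (B + Real.sqrt C) := by positivity
  have hneg : -((μ * b - D) / (2 * ε)) = (D - μ * b) / (2 * ε) := by ring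
  refine ⟨_, _, rfl, rfl, ?_, ?_, ?_, ?_⟩
  · rw [hneg, div_le_div_iff₀ hBsC (by positivity)]
    nlinarith [mul_le_mul_of_nonneg_left h2 h1, mul_le_mul_of_nonneg_left hγc hε.le]
  · rw [hneg, div_le_div_iff₀ (by positivity) (by positivity)]
    nlinarith [mul_le_mul_of_nonneg_left h3 h1, mul_le_mul_of_nonneg_left hcC hε.le]
  · rw [div_le_div_iff₀ hε (by positivity)]
    nlinarith [mul_le_mul_of_nonneg_right h3 hε.le]
  · rw [div_le_div_iff₀ (by positivity) hε]
    nlinarith [mul_le_mul_of_nonneg_right h2 hε.le]
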